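/- Let G be a Garside group of finite type and x, α, β ∈ G such that inf(x^α) = inf(x^{α∧β}) = inf(x^β) and sup(x^α) = sup(x^{α∧β}) = sup(x^β). Then the transports at x satisfy (α ∧ β)^{(1)} = α^{(1)} ∧ β^{(1)}. -/

import Mathlib

/-!
Left translations, and right translations by powers of `Δ`, are automorphisms of the prefix
lattice, and `inf(y⁻¹) = -sup(y)`. Hence, with `p = inf(x^γ)` and `q = sup(x^γ)`,
`γ 𝔭(x^γ) = (x γ Δ^(-p) ∧ γ Δ) ∧ (x⁻¹ γ Δ^q ∧ γ Δ)`. When `p` and `q` are the same for `α`, `β`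
and `α ∧ β`, the right-hand side is a meet of lattice homomorphisms of `γ`, so it commutes with
`∧`, and so does left multiplication by `𝔭(x)⁻¹`.
-/

namespace GarsidePaper

/-- A Garside structure of finite type on a group `G`: a positive submonoid `P` with
`P ∩ P⁻¹ = {1}`, a Garside element `Δ ∈ P`, the prefix order `a ≼ b ↔ a⁻¹b ∈ P`
a lattice order (with meet `wedge` and join `vee`), the simple elements `[1,Δ]`
generating `G` and being finite, `Δ⁻¹PΔ = P`, a finite norm on positive elements,
and the infimum and supremum functions `inf`, `sup` characterised by
`Δ^(inf x) ≼ x ≼ Δ^(sup x)` with `inf x` maximal and `sup x` minimal. -/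
structure Garside (G : Type*) [Group G] where
  P : Submonoid G
  Δ : G
  purity : ∀ a : G, a ∈ P → a⁻¹ ∈ P → a = 1
  delta_mem : Δ ∈ P
  wedge : G → G → G
  vee : G → G → G
  wedge_le_left : ∀ a b : G, (wedge a b)⁻¹ * a ∈ P
  wedge_le_right : ∀ a b : G, (wedge a b)⁻¹ * b ∈ P
  le_wedge : ∀ a b c : G, c⁻¹ * a ∈ P → c⁻¹ * b ∈ P → c⁻¹ * wedge a b ∈ P
  le_vee_left : ∀ a b : G, a⁻¹ * vee a b ∈ P
  le_vee_right : ∀ a b : G, b⁻¹ * vee a b ∈ P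
  vee_le : ∀ a b c : G, a⁻¹ * c ∈ P → b⁻¹ * c ∈ P → (vee a b)⁻¹ * c ∈ P
  simples_generate : Subgroup.closure {a : G | a ∈ P ∧ a⁻¹ * Δ ∈ P} = (⊤ : Subgroup G)
  conj_pos : ∀ a : G, a ∈ P → Δ⁻¹ * a * Δ ∈ P
  norm : G → ℕ
  norm_exists : ∀ x : G, x ∈ P → x ≠ 1 →
    ∃ l : List G, (∀ s ∈ l, s ∈ P ∧ s ≠ 1) ∧ l.prod = x ∧ l.length = norm x
  norm_max : ∀ x : G, x ∈ P → x ≠ 1 →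
    ∀ l : List G, (∀ s ∈ l, s ∈ P ∧ s ≠ 1) → l.prod = x → l.length ≤ norm x
  simples_finite : Set.Finite {a : G | a ∈ P ∧ a⁻¹ * Δ ∈ P}
  inf : G → ℤ
  sup : G → ℤ
  inf_le : ∀ x : G, (Δ ^ inf x)⁻¹ * x ∈ P
  inf_max : ∀ (x : G) (p : ℤ), (Δ ^ p)⁻¹ * x ∈ P → p ≤ inf x
  le_sup : ∀ x : G, x⁻¹ * Δ ^ sup x ∈ P
  sup_min : ∀ (x : G) (q : ℤ), x⁻¹ * Δ ^ q ∈ P → sup x ≤ q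

namespace Garside

variable {G : Type*} [Group G]

/-- The prefix order `a ≼ b`. -/
def le (S : Garside G) (a b : G) : Prop := a⁻¹ * b ∈ S.P

/-- The canonical length `ℓ(x) = sup(x) - inf(x)`. -/
def len (S : Garside G) (x : G) : ℤ := S.sup x - S.inf x

/-- The initial factor `ι(x) = (x Δ^(-inf x)) ∧ Δ`. -/
def iota (S : Garside G) (x : G) : G := S.wedge (x * S.Δ ^ (-S.inf x)) S.Δ

/-- The preferred prefix `𝔭(x) = ι(x) ∧ ι(x⁻¹)`. -/
def pp (S : Garside G) (x : G) : G := S.wedge (S.iota x) (S.iota x⁻¹)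

/-- Cyclic sliding `𝔰(x) = 𝔭(x)⁻¹ x 𝔭(x)`. -/
def sl (S : Garside G) (x : G) : G := (S.pp x)⁻¹ * x * S.pp x

/-- The final factor `φ(x) = (Δ^(sup x - 1) ∧ x)⁻¹ x`. -/
def phi (S : Garside G) (x : G) : G := (S.wedge (S.Δ ^ (S.sup x - 1)) x)⁻¹ * x

/-- Conjugation by `Δ`: `τ(x) = Δ⁻¹ x Δ`. -/
def tau (S : Garside G) (x : G) : G := S.Δ⁻¹ * x * S.Δ

/-- Cycling `c(x) = ι(x)⁻¹ x ι(x)`. -/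
def cyc (S : Garside G) (x : G) : G := (S.iota x)⁻¹ * x * S.iota x

/-- Decycling `d(x) = φ(x) x φ(x)⁻¹`. -/
def dec (S : Garside G) (x : G) : G := S.phi x * x * (S.phi x)⁻¹

/-- The transport `α^{(1)} = 𝔭(x)⁻¹ α 𝔭(x^α)` of `α` at `x`. -/
def transport (S : Garside G) (x α : G) : G := (S.pp x)⁻¹ * α * S.pp (α⁻¹ * x * α)

/-- The iterated transport: `itTransport x i α = α^{(i)}`, the transport of `α^{(i-1)}`
at `𝔰^{i-1}(x)`, with `α^{(0)} = α`. -/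
def itTransport (S : Garside G) (x : G) : ℕ → G → G
  | 0, α => α
  | i + 1, α => S.transport ((S.sl)^[i] x) (S.itTransport x i α)

/-- `𝔓_i(x) = 𝔭(x) 𝔭(𝔰(x)) ⋯ 𝔭(𝔰^{i-1}(x))`, with `𝔓₀(x) = 1`. -/
def PP (S : Garside G) (x : G) : ℕ → G
  | 0 => 1
  | i + 1 => S.PP x i * S.pp ((S.sl)^[i] x)

/-- The summit set `SS(x)`. -/
def SS (S : Garside G) (x : G) : Set G :=
  {y | IsConj x y ∧ ∀ z : G, IsConj x z → S.inf z ≤ S.inf y}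

/-- The super summit set `SSS(x)`. -/
def SSS (S : Garside G) (x : G) : Set G :=
  {y | IsConj x y ∧ (∀ z : G, IsConj x z → S.inf z ≤ S.inf y) ∧
       (∀ z : G, IsConj x z → S.sup y ≤ S.sup z)}

/-- The ultra summit set `USS(x)`. -/
def USS (S : Garside G) (x : G) : Set G :=
  {y | y ∈ S.SSS x ∧ ∃ m : ℕ, 1 ≤ m ∧ (S.cyc)^[m] y = y}

/-- The reduced super summit set `RSSS(x)`. -/
def RSSS (S : Garside G) (x : G) : Set G :=
  {y | IsConj x y ∧ (∃ m : ℕ, 1 ≤ m ∧ (S.cyc)^[m] y = y) ∧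
       (∃ n : ℕ, 1 ≤ n ∧ (S.dec)^[n] y = y)}

/-- The set of sliding circuits `SC(x)`. -/
def SC (S : Garside G) (x : G) : Set G :=
  {y | IsConj x y ∧ ∃ m : ℕ, 1 ≤ m ∧ (S.sl)^[m] y = y}

end Garside

namespace Garside

variable {G : Type*} [Group G] (S : Garside G)

abbrev toSemilatticeInf : SemilatticeInf G where
  le := S.le
  le_refl a := by simp [le]
  le_trans a b c hab hbc := by simpa [le, mul_assoc] using S.P.mul_mem hab hbc
  le_antisymm a b hab hba :=
    inv_mul_eq_one.mp (S.purity _ hab (by simpa [le] using hba))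
  inf := S.wedge
  inf_le_left := S.wedge_le_left
  inf_le_right := S.wedge_le_right
  le_inf a b c := S.le_wedge b c a

theorem wedge_wedge_wedge_comm (a b c d : G) :
    S.wedge (S.wedge a b) (S.wedge c d) = S.wedge (S.wedge a c) (S.wedge b d) :=
  let := S.toSemilatticeInf
  inf_inf_inf_comm a b c d

def PreservesWedge (f : G → G) : Prop :=
  ∀ a b, f (S.wedge a b) = S.wedge (f a) (f b)

namespace PreservesWedge

variable {S} {f g : G → G}

theorem comp (hf : S.PreservesWedge f) (hg : S.PreservesWedge g) : S.PreservesWedge (f ∘ g) :=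
  fun a b => by simp only [Function.comp_apply, hg a b, hf (g a) (g b)]

theorem wedge (hf : S.PreservesWedge f) (hg : S.PreservesWedge g) :
    S.PreservesWedge fun a => S.wedge (f a) (g a) :=
  fun a b => by simp only [hf a b, hg a b, S.wedge_wedge_wedge_comm]

end PreservesWedge

theorem preservesWedge_of_le_iff {f : G → G} (hf : ∀ a b, S.le (f a) (f b) ↔ S.le a b)
    (hsurj : Function.Surjective f) : S.PreservesWedge f := by
  let := S.toSemilatticeInf
  let e : G ≃o G :=
    { Equiv.ofBijective f ⟨fun a b hab => le_antisymm ((hf a b).mp hab.le) ((hf b a).mp hab.ge),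
        hsurj⟩ with
      map_rel_iff' := hf _ _ }
  exact e.map_inf

theorem preservesWedge_mul_left (c : G) : S.PreservesWedge (c * ·) :=
  S.preservesWedge_of_le_iff (fun a b => by simp [le, mul_assoc])
    (fun a => ⟨c⁻¹ * a, mul_inv_cancel_left c a⟩)

def simples : Set G := {a | a ∈ S.P ∧ a⁻¹ * S.Δ ∈ S.P}

theorem mapsTo_conj_delta_simples :
    Set.MapsTo (fun a => S.Δ⁻¹ * a * S.Δ) S.simples S.simples := by
  rintro a ⟨ha, haΔ⟩
  refine ⟨S.conj_pos a ha, ?_⟩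
  simpa [mul_assoc] using S.conj_pos _ haΔ

/-- Conjugation by `Δ` permutes the finite set of simples, so some power of it fixes every
simple element, and hence all of `G`. -/
theorem exists_delta_pow_mem_center : ∃ N : ℕ, 0 < N ∧ S.Δ ^ N ∈ Subgroup.center G := by
  have : Finite S.simples := S.simples_finite.to_subtype
  set f := fun a => S.Δ⁻¹ * a * S.Δ
  have hf : S.mapsTo_conj_delta_simples.restrict.Bijective :=
    ((S.mapsTo_conj_delta_simples.restrict_inj).mpr fun a _ b _ hab =>
      mul_left_cancel (mul_right_cancel hab)).bijective_of_finite
  obtain ⟨N, hN, hpow⟩ := (isOfFinOrder_of_finite (Equiv.ofBijective _ hf)).exists_pow_eq_one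
  have hfix : ∀ s ∈ S.simples, f^[N] s = s := fun s hs => by
    have := congrArg (fun e : Equiv.Perm S.simples => (e ⟨s, hs⟩ : G)) hpow
    simpa [Equiv.Perm.coe_pow, Set.MapsTo.iterate_restrict] using this
  have hiter : ∀ n : ℕ, ∀ a, f^[n] a = (S.Δ ^ n)⁻¹ * a * S.Δ ^ n := by
    intro n
    induction n with
    | zero => simp
    | succ n ih => intro a; simp only [Function.iterate_succ_apply', ih, f, pow_succ]; group
  have hcomm : S.simples ⊆ Subgroup.centralizer {S.Δ ^ N} := fun s hs => by
    have hconj : (S.Δ ^ N)⁻¹ * s * S.Δ ^ N = s := (hiter N s).symm.trans (hfix s hs)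
    refine Subgroup.mem_centralizer_singleton_iff.mpr ?_
    conv_rhs => rw [← hconj]
    group
  have htop : Subgroup.centralizer {S.Δ ^ N} = ⊤ :=
    eq_top_iff.mpr (S.simples_generate ▸ (Subgroup.closure_le _).mpr hcomm)
  exact ⟨N, hN, Subgroup.centralizer_eq_top_iff_subset.mp htop rfl⟩

theorem pow_conj_mem (n : ℕ) {a : G} (ha : a ∈ S.P) : (S.Δ ^ n)⁻¹ * a * S.Δ ^ n ∈ S.P := by
  induction n with
  | zero => simpa using ha
  | succ n ih => simpa [pow_succ, mul_assoc] using S.conj_pos _ ih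

theorem zpow_conj_mem (k : ℤ) {a : G} (ha : a ∈ S.P) : (S.Δ ^ k)⁻¹ * a * S.Δ ^ k ∈ S.P := by
  obtain ⟨n, rfl | rfl⟩ := k.eq_nat_or_neg
  · simpa using S.pow_conj_mem n ha
  obtain ⟨N, hN, hcenter⟩ := S.exists_delta_pow_mem_center
  -- Modulo the central element `z = Δ^(N n)`, `Δ^(-n)` is the positive power `Δ^((N - 1) n)`.
  have hpow : S.Δ ^ ((N - 1) * n) = (S.Δ ^ N) ^ n * (S.Δ ^ n)⁻¹ := by
    rw [eq_mul_inv_iff_mul_eq, ← pow_add, ← pow_mul, ← Nat.succ_mul, Nat.succ_eq_add_one,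
      Nat.sub_add_cancel hN]
  set z := (S.Δ ^ N) ^ n
  have hz : z⁻¹ * a * z = a := by
    rw [mul_assoc, Subgroup.mem_center_iff.mp (pow_mem hcenter n) a, inv_mul_cancel_left]
  convert S.pow_conj_mem ((N - 1) * n) ha using 1
  rw [hpow, show (z * (S.Δ ^ n)⁻¹)⁻¹ * a * (z * (S.Δ ^ n)⁻¹)
      = S.Δ ^ n * (z⁻¹ * a * z) * (S.Δ ^ n)⁻¹ by group, hz]
  simp

theorem zpow_conj_mem_iff (k : ℤ) {a : G} : (S.Δ ^ k)⁻¹ * a * S.Δ ^ k ∈ S.P ↔ a ∈ S.P := by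
  refine ⟨fun h => ?_, S.zpow_conj_mem k⟩
  simpa [zpow_neg, mul_assoc] using S.zpow_conj_mem (-k) h

theorem preservesWedge_mul_zpow_delta (k : ℤ) : S.PreservesWedge (· * S.Δ ^ k) :=
  S.preservesWedge_of_le_iff
    (fun a b => by simpa [le, mul_assoc] using S.zpow_conj_mem_iff k (a := a⁻¹ * b))
    (fun a => ⟨a * (S.Δ ^ k)⁻¹, inv_mul_cancel_right a _⟩)

theorem preservesWedge_mul_delta : S.PreservesWedge (· * S.Δ) := by
  simpa only [zpow_one] using S.preservesWedge_mul_zpow_delta 1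

theorem inf_inv (y : G) : S.inf y⁻¹ = -S.sup y := by
  refine le_antisymm ?_ (S.inf_max _ _ ?_)
  · refine le_neg.mp (S.sup_min _ _ ?_)
    convert S.zpow_conj_mem (-S.inf y⁻¹) (S.inf_le y⁻¹) using 1
    group
  · convert S.zpow_conj_mem (-S.sup y) (S.le_sup y) using 1
    group

def ppConjForm (x : G) (p q : ℤ) (γ : G) : G :=
  S.wedge (S.wedge (x * γ * S.Δ ^ (-p)) (γ * S.Δ)) (S.wedge (x⁻¹ * γ * S.Δ ^ q) (γ * S.Δ))

theorem mul_pp_conj (x γ : G) :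
    γ * S.pp (γ⁻¹ * x * γ) = S.ppConjForm x (S.inf (γ⁻¹ * x * γ)) (S.sup (γ⁻¹ * x * γ)) γ := by
  simp only [pp, iota, ppConjForm, S.inf_inv, neg_neg, S.preservesWedge_mul_left γ _ _]
  congr 2 <;> group

theorem transport_eq (x γ : G) :
    S.transport x γ =
      (S.pp x)⁻¹ * S.ppConjForm x (S.inf (γ⁻¹ * x * γ)) (S.sup (γ⁻¹ * x * γ)) γ := by
  rw [transport, mul_assoc, mul_pp_conj]

theorem preservesWedge_ppConjForm (x : G) (p q : ℤ) : S.PreservesWedge (S.ppConjForm x p q) :=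
  (((S.preservesWedge_mul_zpow_delta (-p)).comp (S.preservesWedge_mul_left x)).wedge
      S.preservesWedge_mul_delta).wedge
    (((S.preservesWedge_mul_zpow_delta q).comp (S.preservesWedge_mul_left x⁻¹)).wedge
      S.preservesWedge_mul_delta)

end Garside

open Garside in
theorem statement11 {G : Type*} [Group G] (S : Garside G) (x α β : G)
    (hi1 : S.inf (α⁻¹ * x * α) = S.inf ((S.wedge α β)⁻¹ * x * S.wedge α β))
    (hi2 : S.inf ((S.wedge α β)⁻¹ * x * S.wedge α β) = S.inf (β⁻¹ * x * β))
    (hs1 : S.sup (α⁻¹ * x * α) = S.sup ((S.wedge α β)⁻¹ * x * S.wedge α β))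
    (hs2 : S.sup ((S.wedge α β)⁻¹ * x * S.wedge α β) = S.sup (β⁻¹ * x * β)) :
    S.transport x (S.wedge α β) = S.wedge (S.transport x α) (S.transport x β) := by
  rw [transport_eq, transport_eq, transport_eq, hi1, hs1, ← hi2, ← hs2,
    S.preservesWedge_ppConjForm]
  exact S.preservesWedge_mul_left _ _ _

end GarsidePaper
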